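/- arXiv:0802.0534 — 2 statements merged into one kernel-verified Lean document; each statement's English description precedes it below -/
import Mathlib

section
/- Let S, D ≥ 1 and let d : Fin D × Fin S → ℝ be nonnegative. Suppose that for every pair (u, v) ∈ Fin S × Fin D we have (∑_{q} d(q, u)) + (∑_{p} d(v, p)) − d(v, u) ≤ 1. Then ∑_{i,j} d(i, j) ≤ S·D/(S + D − 1). -/
/-!
Summing the `S * D` constraints, each `d (i, j)` is counted once in its column sum, once in its
row sum and subtracted once, so the left-hand sides add up to `(S + D - 1) * ∑ i j, d (i, j)`,
while the right-hand sides add up to `S * D`.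
-/

open Finset

theorem sum_sum_row_add_col_sub {α β R : Type*} [Fintype α] [Fintype β] [CommRing R]
    (f : α → β → R) :
    ∑ a, ∑ b, ((∑ a', f a' b) + (∑ b', f a b') - f a b) =
      (Fintype.card α + Fintype.card β - 1) * ∑ a, ∑ b, f a b := by
  simp only [sum_sub_distrib, sum_add_distrib, sum_const, card_univ, nsmul_eq_mul,
    ← mul_sum]
  rw [sum_comm (f := fun a b => f b a)]
  ring

theorem stmt_0_general (S D : ℕ) (hS : 1 ≤ S) (hD : 1 ≤ D)
    (d : Fin D × Fin S → ℝ)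
    (h : ∀ (u : Fin S) (v : Fin D),
      (∑ q : Fin D, d (q, u)) + (∑ p : Fin S, d (v, p)) - d (v, u) ≤ 1) :
    ∑ i : Fin D, ∑ j : Fin S, d (i, j) ≤ (S : ℝ) * D / (S + D - 1) := by
  have hpos : (0 : ℝ) < S + D - 1 := by
    have : (1 : ℝ) ≤ S := by exact_mod_cast hS
    have : (1 : ℝ) ≤ D := by exact_mod_cast hD
    linarith
  have hcount := sum_sum_row_add_col_sub fun i j => d (i, j)
  simp only [Fintype.card_fin] at hcount
  have hbound : ∑ i : Fin D, ∑ j : Fin S,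
      ((∑ q : Fin D, d (q, j)) + (∑ p : Fin S, d (i, p)) - d (i, j)) ≤ (S : ℝ) * D := by
    calc _ ≤ ∑ _i : Fin D, ∑ _j : Fin S, (1 : ℝ) :=
          sum_le_sum fun i _ => sum_le_sum fun j _ => h j i
      _ = (S : ℝ) * D := by simp [mul_comm]
  rw [le_div_iff₀ hpos]
  linarith

theorem stmt_0 (S D : ℕ) (hS : 1 ≤ S) (hD : 1 ≤ D)
    (d : Fin D × Fin S → ℝ) (hd : ∀ p, 0 ≤ d p)
    (h : ∀ (u : Fin S) (v : Fin D),
      (∑ q : Fin D, d (q, u)) + (∑ p : Fin S, d (v, p)) - d (v, u) ≤ 1) :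
    ∑ i : Fin D, ∑ j : Fin S, d (i, j) ≤ (S : ℝ) * D / (S + D - 1) :=
  stmt_0_general S D hS hD d h
end

section
/- Let K ≥ 2 and let d : Fin K × Fin K → ℝ be nonnegative with d(i,i) = 0 for all i. Suppose that for every ordered pair (p,q) with p ≠ q we have (∑_{j ≠ p} d(j, p)) + (∑_{i ≠ q} d(q, i)) − d(q, p) ≤ 1. Then ∑_{i ≠ j} d(i, j) ≤ K(K−1)/(2K−3). -/
/-!
Sum the hypothesis over all `K(K-1)` ordered pairs `(p, q)` with `p ≠ q`. An off-diagonal entry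
`d(b, a)` occurs `K - 1` times as part of a column sum (`p = a`), `K - 1` times as part of a row
sum (`q = b`), and is subtracted once (`(p, q) = (a, b)`), so the left-hand side totals
`(2K - 3) S`, where `S` is the sum of all off-diagonal entries. Hence `(2K - 3) S ≤ K(K - 1)`.
-/

open Finset

section
variable {ι R : Type*} [Fintype ι] [DecidableEq ι] [CommRing R]

lemma sum_filter_ne_comm (f : ι → ι → R) :
    ∑ i, ∑ j ∈ univ.filter (· ≠ i), f i j = ∑ j, ∑ i ∈ univ.filter (· ≠ j), f i j :=
  Finset.sum_comm' (by simp [and_comm, eq_comm])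

lemma sum_filter_ne_eq_sub (f : ι → R) (p : ι) :
    ∑ q ∈ univ.filter (· ≠ p), f q = ∑ q, f q - f p := by
  rw [filter_ne', sum_erase_eq_sub (mem_univ p)]

lemma card_filter_ne_cast (p : ι) :
    ((univ.filter (· ≠ p)).card : R) = Fintype.card ι - 1 := by
  rw [filter_ne', card_erase_of_mem (mem_univ p), card_univ,
    Nat.cast_sub (Fintype.card_pos_iff.mpr ⟨p⟩)]
  simp

lemma sum_colSum_add_rowSum_sub_eq (d : ι × ι → R) :
    ∑ p, ∑ q ∈ univ.filter (· ≠ p),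
      ((∑ j ∈ univ.filter (· ≠ p), d (j, p)) + (∑ i ∈ univ.filter (· ≠ q), d (q, i)) - d (q, p))
      = (2 * Fintype.card ι - 3) * ∑ i, ∑ j ∈ univ.filter (· ≠ i), d (i, j) := by
  set colSum := fun p : ι => ∑ j ∈ univ.filter (· ≠ p), d (j, p)
  set rowSum := fun q : ι => ∑ i ∈ univ.filter (· ≠ q), d (q, i)
  have h_total : ∑ p, colSum p = ∑ q, rowSum q := (sum_filter_ne_comm fun j p => d (j, p)).symm
  have h_inner (p : ι) : ∑ q ∈ univ.filter (· ≠ p), (colSum p + rowSum q - d (q, p))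
      = (Fintype.card ι - 2) * colSum p + ∑ q, rowSum q - rowSum p := by
    rw [sum_sub_distrib, sum_add_distrib, sum_const, nsmul_eq_mul, card_filter_ne_cast,
      sum_filter_ne_eq_sub]
    ring
  rw [sum_congr rfl fun p _ => h_inner p, sum_sub_distrib, sum_add_distrib, ← mul_sum, h_total,
    sum_const, card_univ, nsmul_eq_mul]
  ring
end

theorem stmt_3_general (K : ℕ) (hK : 2 ≤ K)
    (d : Fin K × Fin K → ℝ)
    (h : ∀ p q : Fin K, p ≠ q →
      (∑ j ∈ Finset.univ.filter (· ≠ p), d (j, p)) +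
      (∑ i ∈ Finset.univ.filter (· ≠ q), d (q, i)) - d (q, p) ≤ 1) :
    (∑ i : Fin K, ∑ j ∈ Finset.univ.filter (· ≠ i), d (i, j))
      ≤ (K : ℝ) * (K - 1) / (2 * K - 3) := by
  have h_pos : (0 : ℝ) < 2 * K - 3 := by
    have : (2 : ℝ) ≤ K := by exact_mod_cast hK
    linarith
  have h_sum := calc
    (2 * K - 3) * ∑ i : Fin K, ∑ j ∈ univ.filter (· ≠ i), d (i, j)
        = ∑ p, ∑ q ∈ univ.filter (· ≠ p), ((∑ j ∈ univ.filter (· ≠ p), d (j, p))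
            + (∑ i ∈ univ.filter (· ≠ q), d (q, i)) - d (q, p)) := by
          rw [sum_colSum_add_rowSum_sub_eq, Fintype.card_fin]
    _ ≤ ∑ p : Fin K, ∑ _q ∈ univ.filter (· ≠ p), (1 : ℝ) :=
          sum_le_sum fun p _ => sum_le_sum fun q hq => h p q (mem_filter.mp hq).2.symm
    _ = K * (K - 1) := by simp only [sum_const, card_filter_ne_cast, nsmul_eq_mul, mul_one,
          card_univ, Fintype.card_fin]
  rw [le_div_iff₀ h_pos]
  linarith

theorem stmt_3 (K : ℕ) (hK : 2 ≤ K)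
    (d : Fin K × Fin K → ℝ) (hd : ∀ p, 0 ≤ d p) (hdiag : ∀ i, d (i, i) = 0)
    (h : ∀ p q : Fin K, p ≠ q →
      (∑ j ∈ Finset.univ.filter (· ≠ p), d (j, p)) +
      (∑ i ∈ Finset.univ.filter (· ≠ q), d (q, i)) - d (q, p) ≤ 1) :
    (∑ i : Fin K, ∑ j ∈ Finset.univ.filter (· ≠ i), d (i, j))
      ≤ (K : ℝ) * (K - 1) / (2 * K - 3) :=
  stmt_3_general K hK d h
end
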